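/- Let U ⊆ ℝⁿ be open, f, g₁, …, g_m : U → ℝ of class C^{1,1}, and Ω = {x ∈ U | g₁(x) ≤ 0, …, g_m(x) ≤ 0}. Let (x₀, λ) ∈ Ω × ℝᵐ be such that, for the Lagrangian L_λ(x) = f(x) + Σᵢ λᵢ gᵢ(x), one has L_λ'(x₀) = 0, λᵢ ≥ 0 and λᵢ gᵢ(x₀) = 0 for all i ∈ {1,…,m}. If liminf_{t→0⁺} L_λ'(x₀ + t·h)h / t > 0 for every nonzero h ∈ C(x₀) ∩ ⋂_{i : λᵢ > 0} ker gᵢ'(x₀), then x₀ is a local minimum point of f over Ω, i.e. there is a neighborhood V of x₀ with f(y) ≥ f(x₀) for all y ∈ V ∩ Ω. -/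

import Mathlib

/-!
Argue direction by direction and conclude by compactness of the unit sphere: it suffices that
every unit vector `h` has a cone `{x₀ + s • v | 0 < s < ρ, v near h}` on which `f ≥ f x₀` over
`Ω`. If an active constraint has `g_j'(x₀) h > 0` the cone eventually leaves `Ω`, and if
`f'(x₀) h > 0` then `f` increases on it. Otherwise the KKT conditions put `h` in the critical cone
and in the kernels of the `g_i'(x₀)` with `λ_i > 0`, so `L'(x₀ + t • h) h > c t` for small
`t > 0`. The Lipschitz bound on `L'` with `L'(x₀) = 0` transfers this positivity to the nearby
directions `v`, so `L` increases along each segment from `x₀` in the cone, and on `Ω` this gives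
`f ≥ L > L x₀ = f x₀`.
-/

open Filter Metric Set
open scoped Topology RealInnerProductSpace NNReal

def C11On {n : ℕ} (f : EuclideanSpace ℝ (Fin n) → ℝ) (U : Set (EuclideanSpace ℝ (Fin n))) :
    Prop :=
  (∀ x ∈ U, DifferentiableAt ℝ f x) ∧
    ∃ K : ℝ≥0, LipschitzOnWith K (fun y => fderiv ℝ f y) U

theorem LipschitzOnWith.congr {α β : Type*} [PseudoEMetricSpace α] [PseudoEMetricSpace β]
    {K : ℝ≥0} {f g : α → β} {s : Set α} (hf : LipschitzOnWith K f s) (hfg : EqOn f g s) :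
    LipschitzOnWith K g s := fun x hx y hy => by
  rw [← hfg hx, ← hfg hy]
  exact hf hx hy

theorem LipschitzOnWith.norm_le_mul_norm_sub {α F : Type*} [SeminormedAddCommGroup α]
    [SeminormedAddCommGroup F] {K : ℝ≥0} {φ : α → F} {s : Set α} {x₀ x : α}
    (hφ : LipschitzOnWith K φ s) (hx₀ : x₀ ∈ s) (hφx₀ : φ x₀ = 0) (hx : x ∈ s) :
    ‖φ x‖ ≤ K * ‖x - x₀‖ := by
  simpa [hφx₀, dist_eq_norm] using hφ.dist_le_mul x hx x₀ hx₀

section C11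

variable {n : ℕ} {U : Set (EuclideanSpace ℝ (Fin n))}

theorem C11On.add {f g : EuclideanSpace ℝ (Fin n) → ℝ} (hf : C11On f U) (hg : C11On g U) :
    C11On (fun x => f x + g x) U := by
  obtain ⟨hfd, Kf, hfK⟩ := hf
  obtain ⟨hgd, Kg, hgK⟩ := hg
  refine ⟨fun x hx => (hfd x hx).add (hgd x hx), Kf + Kg, (hfK.add hgK).congr fun x hx => ?_⟩
  exact (fderiv_fun_add (hfd x hx) (hgd x hx)).symm

theorem C11On.const_mul {f : EuclideanSpace ℝ (Fin n) → ℝ} (hf : C11On f U) (c : ℝ) :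
    C11On (fun x => c * f x) U := by
  obtain ⟨hfd, K, hfK⟩ := hf
  refine ⟨fun x hx => (hfd x hx).const_mul c, ‖c‖₊ * K,
    ((lipschitzWith_smul c).comp_lipschitzOnWith hfK).congr fun x hx => ?_⟩
  exact (fderiv_const_mul (hfd x hx) c).symm

theorem C11On.sum {ι : Type*} {s : Finset ι} {F : ι → EuclideanSpace ℝ (Fin n) → ℝ}
    (hF : ∀ i ∈ s, C11On (F i) U) : C11On (fun x => ∑ i ∈ s, F i x) U := by
  classical
  induction s using Finset.induction_on with
  | empty =>
    exact ⟨fun _ _ => by simp, 0, by simp⟩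
  | insert i s hi ih =>
    simp only [Finset.sum_insert hi]
    exact (hF i (Finset.mem_insert_self i s)).add
      (ih fun j hj => hF j (Finset.mem_insert_of_mem hj))

end C11

section Directional

variable {E : Type*} [NormedAddCommGroup E] [NormedSpace ℝ E]

theorem tendsto_slope_prod_nhdsGT {p : E → ℝ} {x₀ h : E} (hp : DifferentiableAt ℝ p x₀) :
    Tendsto (fun q : ℝ × E => q.1⁻¹ * (p (x₀ + q.1 • q.2) - p x₀)) (𝓝[>] 0 ×ˢ 𝓝 h)
      (𝓝 (fderiv ℝ p x₀ h)) := by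
  have hfst : Tendsto Prod.fst (𝓝[>] (0 : ℝ) ×ˢ 𝓝 h) (𝓝[>] 0) := tendsto_fst
  have hsmul : Tendsto (fun q : ℝ × E => q.1 • q.2) (𝓝[>] 0 ×ˢ 𝓝 h) (𝓝 0) := by
    simpa using (hfst.mono_right nhdsWithin_le_nhds).smul (tendsto_snd (f := 𝓝[>] (0 : ℝ)))
  have hrescaled : Tendsto (fun q : ℝ × E => q.1⁻¹ • q.1 • q.2) (𝓝[>] 0 ×ˢ 𝓝 h) (𝓝 h) := by
    refine tendsto_snd.congr' ?_
    filter_upwards [hfst.eventually self_mem_nhdsWithin] with q hq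
    rw [smul_smul, inv_mul_cancel₀ (ne_of_gt hq), one_smul]
  simpa using hp.hasFDerivAt.hasFDerivWithinAt.lim (s := univ) hsmul (by simp) hrescaled

theorem eventually_lt_of_fderiv_apply_pos {p : E → ℝ} {x₀ h : E} (hp : DifferentiableAt ℝ p x₀)
    (hph : 0 < fderiv ℝ p x₀ h) :
    ∀ᶠ q in 𝓝[>] (0 : ℝ) ×ˢ 𝓝 h, p x₀ < p (x₀ + q.1 • q.2) := by
  filter_upwards [(tendsto_slope_prod_nhdsGT hp).eventually (lt_mem_nhds hph),
    tendsto_fst.eventually (self_mem_nhdsWithin (s := Ioi (0 : ℝ)))] with q hq hq₁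
  exact sub_pos.1 (pos_of_mul_pos_right hq (inv_nonneg.2 (le_of_lt hq₁)))

theorem lt_add_smul_of_fderiv_apply_pos {L : E → ℝ} {x v : E} {s : ℝ} (hs : 0 < s)
    (hd : ∀ σ ∈ Icc 0 s, DifferentiableAt ℝ L (x + σ • v))
    (hpos : ∀ σ ∈ Ioo 0 s, 0 < fderiv ℝ L (x + σ • v) v) : L x < L (x + s • v) := by
  have hderiv : ∀ σ ∈ Icc 0 s,
      HasDerivAt (fun τ : ℝ => L (x + τ • v)) (fderiv ℝ L (x + σ • v) v) σ := fun σ hσ => by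
    have hline : HasDerivAt (fun τ : ℝ => x + τ • v) v σ := by
      simpa using ((hasDerivAt_id σ).smul_const v).const_add x
    exact (hd σ hσ).hasFDerivAt.comp_hasDerivAt σ hline
  have hmono : StrictMonoOn (fun τ : ℝ => L (x + τ • v)) (Icc 0 s) := by
    refine strictMonoOn_of_deriv_pos (convex_Icc 0 s)
      (fun σ hσ => (hderiv σ hσ).continuousAt.continuousWithinAt) fun σ hσ => ?_
    rw [interior_Icc] at hσ
    rw [(hderiv σ (Ioo_subset_Icc_self hσ)).deriv]
    exact hpos σ hσ
  simpa using hmono (left_mem_Icc.2 hs.le) (right_mem_Icc.2 hs.le) hs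

end Directional

section SecondOrder

variable {E : Type*} [NormedAddCommGroup E] [NormedSpace ℝ E]
  {L : E → ℝ} {U : Set E} {x₀ h : E} {K : ℝ≥0}

theorem abs_fderiv_apply_sub_le (hLip : LipschitzOnWith K (fderiv ℝ L) U) (hx₀ : x₀ ∈ U)
    (hstat : fderiv ℝ L x₀ = 0) {v : E} {σ : ℝ} (hσ : 0 ≤ σ) (hv : x₀ + σ • v ∈ U)
    (hh : x₀ + σ • h ∈ U) :
    |fderiv ℝ L (x₀ + σ • v) v - fderiv ℝ L (x₀ + σ • h) h| ≤
      σ * (K * ((‖v‖ + ‖h‖) * ‖v - h‖)) := by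
  set A := fderiv ℝ L (x₀ + σ • v)
  set B := fderiv ℝ L (x₀ + σ • h)
  have hAB : ‖A - B‖ ≤ K * (σ * ‖v - h‖) := by
    simpa [dist_eq_norm, ← smul_sub, norm_smul, abs_of_nonneg hσ] using
      hLip.dist_le_mul _ hv _ hh
  have hB : ‖B‖ ≤ K * (σ * ‖h‖) := by
    simpa [norm_smul, abs_of_nonneg hσ] using hLip.norm_le_mul_norm_sub hx₀ hstat hh
  calc |A v - B h| = |(A - B) v + B (v - h)| := by simp
    _ ≤ ‖A - B‖ * ‖v‖ + ‖B‖ * ‖v - h‖ :=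
      (abs_add_le _ _).trans (add_le_add ((A - B).le_opNorm v) (B.le_opNorm _))
    _ ≤ K * (σ * ‖v - h‖) * ‖v‖ + K * (σ * ‖h‖) * ‖v - h‖ := by gcongr
    _ = σ * (K * ((‖v‖ + ‖h‖) * ‖v - h‖)) := by ring

theorem isBoundedUnder_ge_fderiv_apply_div (hU : U ∈ 𝓝 x₀)
    (hLip : LipschitzOnWith K (fderiv ℝ L) U) (hstat : fderiv ℝ L x₀ = 0) :
    IsBoundedUnder (· ≥ ·) (𝓝[>] 0) (fun t : ℝ => fderiv ℝ L (x₀ + t • h) h / t) := by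
  have hline : Tendsto (fun t : ℝ => x₀ + t • h) (𝓝[>] 0) (𝓝 x₀) :=
    (Continuous.tendsto' (by fun_prop) 0 x₀ (by simp)).mono_left nhdsWithin_le_nhds
  refine ⟨-(K * ‖h‖ ^ 2), eventually_map.2 ?_⟩
  filter_upwards [hline.eventually_mem hU, self_mem_nhdsWithin] with t ht ht₀
  have hnorm := hLip.norm_le_mul_norm_sub (mem_of_mem_nhds hU) hstat ht
  rw [add_sub_cancel_left, norm_smul, Real.norm_of_nonneg (le_of_lt ht₀)] at hnorm
  have happ := (abs_le.1 ((fderiv ℝ L (x₀ + t • h)).le_opNorm h)).1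
  rw [ge_iff_le, le_div_iff₀ ht₀]
  nlinarith [norm_nonneg h]

theorem exists_pos_eventually_fderiv_apply_pos (hU : U ∈ 𝓝 x₀)
    (hLip : LipschitzOnWith K (fderiv ℝ L) U) (hstat : fderiv ℝ L x₀ = 0) {c : ℝ} (hc : 0 < c)
    (hch : ∀ᶠ t in 𝓝[>] 0, c * t < fderiv ℝ L (x₀ + t • h) h) :
    ∃ ρ > (0 : ℝ), ∀ᶠ v in 𝓝 h, (∀ σ ∈ Ico 0 ρ, x₀ + σ • v ∈ U) ∧
      ∀ σ ∈ Ioo 0 ρ, 0 < fderiv ℝ L (x₀ + σ • v) v := by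
  obtain ⟨r, hr, hrU⟩ := Metric.mem_nhds_iff.1 hU
  obtain ⟨ε, hε, hεc⟩ := mem_nhdsGT_iff_exists_Ioo_subset.1 hch
  set ρ := min ε (r / (‖h‖ + 1))
  have hball : ∀ v ∈ ball h 1, ∀ σ ∈ Ico 0 ρ, x₀ + σ • v ∈ U := by
    intro v hv σ hσ
    apply hrU
    have hvh : ‖v‖ < ‖h‖ + 1 := by
      have := norm_le_norm_add_norm_sub' v h
      linarith [mem_ball_iff_norm.1 hv]
    have hσr : σ * (‖h‖ + 1) < r :=
      (lt_div_iff₀ (by positivity)).1 (hσ.2.trans_le (min_le_right _ _))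
    rw [mem_ball_iff_norm, add_sub_cancel_left, norm_smul, Real.norm_of_nonneg hσ.1]
    linarith [mul_le_mul_of_nonneg_left hvh.le hσ.1]
  have hsmall : ∀ᶠ v in 𝓝 h, K * ((‖v‖ + ‖h‖) * ‖v - h‖) < c := by
    have hcont : ContinuousAt (fun v => K * ((‖v‖ + ‖h‖) * ‖v - h‖)) h := by fun_prop
    simpa using hcont.eventually (gt_mem_nhds (by simpa using hc))
  refine ⟨ρ, lt_min hε (by positivity), ?_⟩
  filter_upwards [ball_mem_nhds h one_pos, hsmall] with v hv hvc
  refine ⟨hball v hv, fun σ hσ => ?_⟩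
  have hσ' := Ioo_subset_Ico_self hσ
  have hest := abs_fderiv_apply_sub_le hLip (mem_of_mem_nhds hU) hstat hσ.1.le
    (hball v hv σ hσ') (hball h (mem_ball_self one_pos) σ hσ')
  have hlt : c * σ < fderiv ℝ L (x₀ + σ • h) h := hεc ⟨hσ.1, hσ.2.trans_le (min_le_left _ _)⟩
  linarith [(abs_le.1 hest).1, mul_lt_mul_of_pos_left hvc hσ.1, mul_comm c σ]

theorem eventually_lt_of_liminf_fderiv_apply_div_pos (hU : U ∈ 𝓝 x₀)
    (hd : ∀ x ∈ U, DifferentiableAt ℝ L x) (hLip : LipschitzOnWith K (fderiv ℝ L) U)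
    (hstat : fderiv ℝ L x₀ = 0)
    (hpos : 0 < liminf (fun t : ℝ => fderiv ℝ L (x₀ + t • h) h / t) (𝓝[>] 0)) :
    ∀ᶠ q in 𝓝[>] (0 : ℝ) ×ˢ 𝓝 h, L x₀ < L (x₀ + q.1 • q.2) := by
  obtain ⟨c, hc, hch⟩ : ∃ c > 0, ∀ᶠ t in 𝓝[>] (0 : ℝ), c * t < fderiv ℝ L (x₀ + t • h) h := by
    refine ⟨_, half_pos hpos, ?_⟩
    -- a `liminf` in `ℝ` carries information only for functions bounded below
    filter_upwards [eventually_lt_of_lt_liminf (half_lt_self hpos)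
      (isBoundedUnder_ge_fderiv_apply_div hU hLip hstat), self_mem_nhdsWithin] with t ht ht₀
    exact (lt_div_iff₀ ht₀).1 ht
  obtain ⟨ρ, hρ, hρh⟩ := exists_pos_eventually_fderiv_apply_pos hU hLip hstat hc hch
  filter_upwards [prod_mem_prod (Ioo_mem_nhdsGT hρ) hρh] with ⟨s, v⟩ ⟨hs, hU', hpos'⟩
  exact lt_add_smul_of_fderiv_apply_pos hs.1 (fun σ hσ => hd _ (hU' σ ⟨hσ.1, hσ.2.trans_lt hs.2⟩))
    fun σ hσ => hpos' σ ⟨hσ.1, hσ.2.trans hs.2⟩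

end SecondOrder

theorem eventually_nhds_of_forall_mem_sphere {E : Type*} [NormedAddCommGroup E]
    [NormedSpace ℝ E] [ProperSpace E] {x₀ : E} {P : E → Prop} (hx₀ : P x₀)
    (hP : ∀ h ∈ sphere (0 : E) 1, ∀ᶠ q in 𝓝[>] (0 : ℝ) ×ˢ 𝓝 h, P (x₀ + q.1 • q.2)) :
    ∀ᶠ y in 𝓝 x₀, P y := by
  have hnhdsSet : ∀ᶠ q in 𝓝[>] (0 : ℝ) ×ˢ 𝓝ˢ (sphere (0 : E) 1), P (x₀ + q.1 • q.2) :=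
    (isCompact_sphere 0 1).mem_prod_nhdsSet_of_forall hP
  have hunif : ∀ᶠ s in 𝓝[>] (0 : ℝ), ∀ v ∈ sphere (0 : E) 1, P (x₀ + s • v) :=
    hnhdsSet.curry.mono fun _ h => h.self_of_nhdsSet
  obtain ⟨ε, hε, hεP⟩ := mem_nhdsGT_iff_exists_Ioo_subset.1 hunif
  filter_upwards [ball_mem_nhds x₀ hε] with y hy
  rcases eq_or_ne y x₀ with rfl | hne
  · exact hx₀
  have hr : 0 < ‖y - x₀‖ := norm_pos_iff.2 (sub_ne_zero.2 hne)
  have hPy := hεP ⟨hr, mem_ball_iff_norm.1 hy⟩ (‖y - x₀‖⁻¹ • (y - x₀))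
    (by simp [norm_smul, hr.ne'])
  rwa [smul_smul, mul_inv_cancel₀ hr.ne', one_smul, add_sub_cancel] at hPy

theorem fderiv_apply_eq_zero_of_multiplier_pos {E ι : Type*} [NormedAddCommGroup E]
    [NormedSpace ℝ E] [Fintype ι] {f : E → ℝ} {g : ι → E → ℝ} {lam : ι → ℝ} {x₀ h : E}
    (hf : DifferentiableAt ℝ f x₀) (hg : ∀ i, DifferentiableAt ℝ (g i) x₀)
    (hstat : fderiv ℝ (fun x => f x + ∑ i, lam i * g i x) x₀ = 0)
    (hlam : ∀ i, 0 ≤ lam i) (hcomp : ∀ i, lam i * g i x₀ = 0)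
    (hcone : ∀ j, g j x₀ = 0 → fderiv ℝ (g j) x₀ h ≤ 0) (hfh : fderiv ℝ f x₀ h ≤ 0)
    {i : ι} (hi : 0 < lam i) : fderiv ℝ (g i) x₀ h = 0 := by
  have hD : HasFDerivAt (fun x => f x + ∑ i, lam i * g i x)
      (fderiv ℝ f x₀ + ∑ i, lam i • fderiv ℝ (g i) x₀) x₀ := hf.hasFDerivAt.add
    (HasFDerivAt.fun_sum (u := Finset.univ) fun i _ => (hg i).hasFDerivAt.const_mul (lam i))
  have hsum : fderiv ℝ f x₀ h + ∑ i, lam i * fderiv ℝ (g i) x₀ h = 0 := by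
    rw [hD.fderiv] at hstat
    simpa using congrArg (· h) hstat
  have hterm : ∀ j, lam j * fderiv ℝ (g j) x₀ h ≤ 0 := fun j => by
    rcases (hlam j).eq_or_lt with hj | hj
    · simp [← hj]
    · exact mul_nonpos_of_nonneg_of_nonpos hj.le
        (hcone j ((mul_eq_zero.1 (hcomp j)).resolve_left hj.ne'))
  have hzero : ∑ j, lam j * fderiv ℝ (g j) x₀ h = 0 :=
    le_antisymm (Finset.sum_nonpos fun j _ => hterm j) (by linarith)
  have := (Finset.sum_eq_zero_iff_of_nonpos fun j _ => hterm j).1 hzero i (Finset.mem_univ i)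
  exact (mul_eq_zero.1 this).resolve_left hi.ne'

theorem local_min_of_secondOrder_condition_general {n m : ℕ}
    (U : Set (EuclideanSpace ℝ (Fin n))) (hU : IsOpen U)
    (f : EuclideanSpace ℝ (Fin n) → ℝ) (g : Fin m → EuclideanSpace ℝ (Fin n) → ℝ)
    (hf : C11On f U) (hg : ∀ i, C11On (g i) U)
    (Ω : Set (EuclideanSpace ℝ (Fin n)))
    (hΩ : Ω = {x | x ∈ U ∧ ∀ i, g i x ≤ 0})
    (x₀ : EuclideanSpace ℝ (Fin n)) (hx₀ : x₀ ∈ Ω)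
    (lam : Fin m → ℝ)
    (L : EuclideanSpace ℝ (Fin n) → ℝ)
    (hL : L = fun x => f x + ∑ i, lam i * g i x)
    (hstat : fderiv ℝ L x₀ = 0)
    (hlam : ∀ i, 0 ≤ lam i)
    (hcomp : ∀ i, lam i * g i x₀ = 0)
    (hsosc : ∀ h : EuclideanSpace ℝ (Fin n), h ≠ 0 →
      (∀ j, g j x₀ = 0 → fderiv ℝ (g j) x₀ h ≤ 0) →
      (∀ i, 0 < lam i → fderiv ℝ (g i) x₀ h = 0) →
      0 < liminf (fun t : ℝ => fderiv ℝ L (x₀ + t • h) h / t) (𝓝[>] (0:ℝ))) :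
    ∃ V ∈ 𝓝 x₀, ∀ y ∈ V ∩ Ω, f x₀ ≤ f y := by
  subst hΩ
  have hx₀U := hx₀.1
  obtain ⟨hdL, K, hLip⟩ : C11On L U :=
    hL ▸ hf.add (C11On.sum fun i _ => (hg i).const_mul (lam i))
  have hLx₀ : L x₀ = f x₀ := by simp [hL, hcomp]
  have hLle : ∀ y, (∀ i, g i y ≤ 0) → L y ≤ f y := fun y hy => by
    simpa [hL] using Finset.sum_nonpos fun i _ => mul_nonpos_of_nonneg_of_nonpos (hlam i) (hy i)
  have hmin : ∀ᶠ y in 𝓝 x₀, y ∈ {x | x ∈ U ∧ ∀ i, g i x ≤ 0} → f x₀ ≤ f y := by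
    refine eventually_nhds_of_forall_mem_sphere (fun _ => le_rfl) fun h hh => ?_
    by_cases hleave : ∃ j, g j x₀ = 0 ∧ 0 < fderiv ℝ (g j) x₀ h
    · obtain ⟨j, hj, hjh⟩ := hleave
      filter_upwards [eventually_lt_of_fderiv_apply_pos ((hg j).1 x₀ hx₀U) hjh] with q hq hqΩ
      linarith [hqΩ.2 j]
    by_cases hfh : 0 < fderiv ℝ f x₀ h
    · filter_upwards [eventually_lt_of_fderiv_apply_pos (hf.1 x₀ hx₀U) hfh] with q hq _
      exact hq.le
    push Not at hleave hfh
    have hker : ∀ i, 0 < lam i → fderiv ℝ (g i) x₀ h = 0 := fun i =>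
      fderiv_apply_eq_zero_of_multiplier_pos (hf.1 x₀ hx₀U) (fun i => (hg i).1 x₀ hx₀U)
        (hL ▸ hstat) hlam hcomp hleave hfh
    filter_upwards [eventually_lt_of_liminf_fderiv_apply_div_pos (hU.mem_nhds hx₀U) hdL hLip
      hstat (hsosc h (ne_of_mem_sphere hh one_ne_zero) hleave hker)] with q hq hqΩ
    linarith [hLle _ hqΩ.2]
  obtain ⟨V, hV, hVmin⟩ := hmin.exists_mem
  exact ⟨V, hV, fun y hy => hVmin y hy.1 hy.2⟩

/-- Theorem 14: a second-order sufficient optimality condition with `C^{1,1}` data. If the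
KKT conditions hold at `(x₀, λ)` and the lower second-order directional derivative of the
Lagrangian is positive on the critical cone, then `x₀` is a local minimum point of `f`
over `Ω`. -/
theorem local_min_of_secondOrder_condition {n m : ℕ} (hm : 0 < m)
    (U : Set (EuclideanSpace ℝ (Fin n))) (hU : IsOpen U)
    (f : EuclideanSpace ℝ (Fin n) → ℝ) (g : Fin m → EuclideanSpace ℝ (Fin n) → ℝ)
    (hf : C11On f U) (hg : ∀ i, C11On (g i) U)
    (Ω : Set (EuclideanSpace ℝ (Fin n)))
    (hΩ : Ω = {x | x ∈ U ∧ ∀ i, g i x ≤ 0})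
    (x₀ : EuclideanSpace ℝ (Fin n)) (hx₀ : x₀ ∈ Ω)
    (lam : Fin m → ℝ)
    (L : EuclideanSpace ℝ (Fin n) → ℝ)
    (hL : L = fun x => f x + ∑ i, lam i * g i x)
    (hstat : fderiv ℝ L x₀ = 0)
    (hlam : ∀ i, 0 ≤ lam i)
    (hcomp : ∀ i, lam i * g i x₀ = 0)
    (hsosc : ∀ h : EuclideanSpace ℝ (Fin n), h ≠ 0 →
      (∀ j, g j x₀ = 0 → fderiv ℝ (g j) x₀ h ≤ 0) →
      (∀ i, 0 < lam i → fderiv ℝ (g i) x₀ h = 0) →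
      0 < liminf (fun t : ℝ => fderiv ℝ L (x₀ + t • h) h / t) (𝓝[>] (0:ℝ))) :
    ∃ V ∈ 𝓝 x₀, ∀ y ∈ V ∩ Ω, f x₀ ≤ f y :=
  local_min_of_secondOrder_condition_general U hU f g hf hg Ω hΩ x₀ hx₀ lam L hL hstat hlam hcomp
    hsosc
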